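/- (Maximum licensed-user rate, Section 7.) The supremum of R_p over all pairs (R_p,R_c) in the achievable region R_in equals the supremum of logdet(I + G Σ_pnet G†) over all PSD block matrices Σ_pnet = [[Σ_p, Q],[Q†, Σ_cp]] (of size (n_pt+n_ct)×(n_pt+n_ct)) whose diagonal blocks satisfy Tr(Σ_p) ≤ P_p and Tr(Σ_cp) ≤ P_c. -/

import Mathlib

/-!
Every generating pair of `R_in` has
`R_p ≤ logdet(I + G Σ_pnet G† + H_cp Σ_cc H_cp†) − logdet(I + H_cp Σ_cc H_cp†) ≤ logdet(I + G Σ_pnet G†)`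
by the subadditivity `det(I + X + Y) ≤ det(I + X) det(I + Y)` for PSD `X`, `Y`, and its `Σ_pnet`
meets both block trace constraints because `Tr Σ_cc ≥ 0`. The bound survives closure and convex
hull since `R ↦ R_p` is continuous and linear. Conversely, every admissible `Σ_pnet` is used by
the pair `(logdet(I + G Σ_pnet G†), 0)`, taking `Σ_cc = 0`.
-/

open Matrix Filter
open scoped ComplexOrder

noncomputable section

/-- `Mat m n` : complex `m × n` matrix. -/
abbrev Mat (m n : ℕ) := Matrix (Fin m) (Fin n) ℂ

/-- `LD M = log det (I + M)` (real part of the determinant). -/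
def LD {ι : Type*} [Fintype ι] [DecidableEq ι] (M : Matrix ι ι ℂ) : ℝ :=
  Real.log ((1 + M).det.re)

/-- real trace. -/
def rTr {ι : Type*} [Fintype ι] (M : Matrix ι ι ℂ) : ℝ := M.trace.re

/-- `G = [H_pp  H_cp]`. -/
def Gmat {npt nct npr : ℕ} (Hpp : Mat npr npt) (Hcp : Mat npr nct) :
    Matrix (Fin npr) (Fin npt ⊕ Fin nct) ℂ :=
  fromCols Hpp Hcp

/-- `G_α = [H_pp  H_cp/√α]`. -/
def Galpha {npt nct npr : ℕ} (Hpp : Mat npr npt) (Hcp : Mat npr nct) (α : ℝ) :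
    Matrix (Fin npr) (Fin npt ⊕ Fin nct) ℂ :=
  fromCols Hpp (((Real.sqrt α : ℂ))⁻¹ • Hcp)

/-- The achievable region `R_in`. -/
def Rin {npt nct npr ncr : ℕ} (Hpp : Mat npr npt) (Hcp : Mat npr nct) (Hcc : Mat ncr nct)
    (Pp Pc : ℝ) : Set (ℝ × ℝ) :=
  closure (convexHull ℝ
    {R : ℝ × ℝ | 0 ≤ R.1 ∧ 0 ≤ R.2 ∧
      ∃ (Sp : Mat npt npt) (Scp Scc : Mat nct nct) (Q : Mat npt nct),
        Sp.PosSemidef ∧ Scp.PosSemidef ∧ Scc.PosSemidef ∧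
        (fromBlocks Sp Q Qᴴ Scp).PosSemidef ∧
        rTr Sp ≤ Pp ∧ rTr Scp + rTr Scc ≤ Pc ∧
        R.1 ≤ LD (Gmat Hpp Hcp * fromBlocks Sp Q Qᴴ Scp * (Gmat Hpp Hcp)ᴴ
                  + Hcp * Scc * Hcpᴴ)
              - LD (Hcp * Scc * Hcpᴴ) ∧
        R.2 ≤ LD (Hcc * Scc * Hccᴴ)})

/-- The partial outer bound region `R_part,out^α`. -/
def Rpart {npt nct npr ncr : ℕ} (Hpp : Mat npr npt) (Hcp : Mat npr nct) (Hcc : Mat ncr nct)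
    (Pp Pc : ℝ) (α : ℝ) : Set (ℝ × ℝ) :=
  closure (convexHull ℝ
    {R : ℝ × ℝ | 0 ≤ R.1 ∧ 0 ≤ R.2 ∧
      ∃ (Qp : Matrix (Fin npt ⊕ Fin nct) (Fin npt ⊕ Fin nct) ℂ) (Scc : Mat nct nct),
        Qp.PosSemidef ∧ Scc.PosSemidef ∧
        rTr Qp + rTr Scc ≤ Pp + α * Pc ∧
        R.1 ≤ LD (Galpha Hpp Hcp α * Qp * (Galpha Hpp Hcp α)ᴴ
                  + ((α : ℂ))⁻¹ • (Hcp * Scc * Hcpᴴ))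
              - LD (((α : ℂ))⁻¹ • (Hcp * Scc * Hcpᴴ)) ∧
        R.2 ≤ LD (((α : ℂ))⁻¹ • (Hcc * Scc * Hccᴴ))})

/-- Tuples in `R_ach,rate` (no power constraints). -/
def RachRate {npt nct npr ncr : ℕ} (Hpp : Mat npr npt) (Hcp : Mat npr nct) (Hcc : Mat ncr nct)
    (Rp Rc : ℝ) (Sp : Mat npt npt) (Scp Scc : Mat nct nct) (Q : Mat npt nct) : Prop :=
  0 ≤ Rp ∧ 0 ≤ Rc ∧ Sp.PosSemidef ∧ Scp.PosSemidef ∧ Scc.PosSemidef ∧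
  (fromBlocks Sp Q Qᴴ Scp).PosSemidef ∧
  Rp ≤ LD (Gmat Hpp Hcp * fromBlocks Sp Q Qᴴ Scp * (Gmat Hpp Hcp)ᴴ + Hcp * Scc * Hcpᴴ)
        - LD (Hcp * Scc * Hcpᴴ) ∧
  Rc ≤ LD (Hcc * Scc * Hccᴴ)

/-- The Lagrangian `L`. -/
def Lfun {npt nct : ℕ} (Pp Pc μ Rp Rc : ℝ) (Sp : Mat npt npt) (Scp Scc : Mat nct nct)
    (l1 l2 : ℝ) : ℝ :=
  μ * Rp + Rc - l1 * (rTr Sp - Pp) - l2 * (rTr Scp + rTr Scc - Pc)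

/-- The Lagrangian `L₁`. -/
def L1fun {npt nct : ℕ} (Pp Pc μ Rp Rc : ℝ) (Sp : Mat npt npt) (Scp Scc : Mat nct nct)
    (l α : ℝ) : ℝ :=
  μ * Rp + Rc - l * (rTr Sp + α * rTr Scp + α * rTr Scc - Pp - α * Pc)

/-- `K = [0  H_cc/√α]`. -/
def Kmat (npt : ℕ) {nct ncr : ℕ} (Hcc : Mat ncr nct) (α : ℝ) :
    Matrix (Fin ncr) (Fin npt ⊕ Fin nct) ℂ :=
  fromCols 0 (((Real.sqrt α : ℂ))⁻¹ • Hcc)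

/-- `K̄ = [[H_pp, H_cp/√α],[0, H_cc/√α]]`. -/
def Kbar {npt nct npr ncr : ℕ} (Hpp : Mat npr npt) (Hcp : Mat npr nct) (Hcc : Mat ncr nct)
    (α : ℝ) : Matrix (Fin npr ⊕ Fin ncr) (Fin npt ⊕ Fin nct) ℂ :=
  fromBlocks Hpp (((Real.sqrt α : ℂ))⁻¹ • Hcp) 0 (((Real.sqrt α : ℂ))⁻¹ • Hcc)

/-- The region `R₁^α` (licensed user encoded first). -/
def R1reg {npt nct npr ncr : ℕ} (Hpp : Mat npr npt) (Hcp : Mat npr nct) (Hcc : Mat ncr nct)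
    (Pp Pc : ℝ) (α : ℝ) : Set (ℝ × ℝ) :=
  closure (convexHull ℝ
    {R : ℝ × ℝ | 0 ≤ R.1 ∧ 0 ≤ R.2 ∧
      ∃ Qp Qc : Matrix (Fin npt ⊕ Fin nct) (Fin npt ⊕ Fin nct) ℂ,
        Qp.PosSemidef ∧ Qc.PosSemidef ∧ rTr Qp + rTr Qc ≤ Pp + α * Pc ∧
        R.1 ≤ LD (Galpha Hpp Hcp α * Qp * (Galpha Hpp Hcp α)ᴴ
                  + Galpha Hpp Hcp α * Qc * (Galpha Hpp Hcp α)ᴴ)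
              - LD (Galpha Hpp Hcp α * Qc * (Galpha Hpp Hcp α)ᴴ) ∧
        R.2 ≤ LD (Kmat npt Hcc α * Qc * (Kmat npt Hcc α)ᴴ)})

/-- The region `R₂^α` (cognitive user encoded first). -/
def R2reg {npt nct npr ncr : ℕ} (Hpp : Mat npr npt) (Hcp : Mat npr nct) (Hcc : Mat ncr nct)
    (Pp Pc : ℝ) (α : ℝ) : Set (ℝ × ℝ) :=
  closure (convexHull ℝ
    {R : ℝ × ℝ | 0 ≤ R.1 ∧ 0 ≤ R.2 ∧
      ∃ Qp Qc : Matrix (Fin npt ⊕ Fin nct) (Fin npt ⊕ Fin nct) ℂ,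
        Qp.PosSemidef ∧ Qc.PosSemidef ∧ rTr Qp + rTr Qc ≤ Pp + α * Pc ∧
        R.1 ≤ LD (Galpha Hpp Hcp α * Qp * (Galpha Hpp Hcp α)ᴴ) ∧
        R.2 ≤ LD (Kmat npt Hcc α * Qp * (Kmat npt Hcc α)ᴴ
                  + Kmat npt Hcc α * Qc * (Kmat npt Hcc α)ᴴ)
              - LD (Kmat npt Hcc α * Qp * (Kmat npt Hcc α)ᴴ)})

/-- The dirty-paper-coding region `D^α`. -/
def Dreg {npt nct npr ncr : ℕ} (Hpp : Mat npr npt) (Hcp : Mat npr nct) (Hcc : Mat ncr nct)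
    (Pp Pc : ℝ) (α : ℝ) : Set (ℝ × ℝ) :=
  closure (convexHull ℝ
    (R1reg Hpp Hcp Hcc Pp Pc α ∪ R2reg Hpp Hcp Hcc Pp Pc α))

/-- `Σ_z = [[I, Q_z],[Q_z†, I]]`. -/
def Sigmaz {npr ncr : ℕ} (Qz : Mat npr ncr) :
    Matrix (Fin npr ⊕ Fin ncr) (Fin npr ⊕ Fin ncr) ℂ :=
  fromBlocks 1 Qz Qzᴴ 1

/-- The outer bound region `R_out^{α,Σ_z}`. -/
def Rout {npt nct npr ncr : ℕ} (Hpp : Mat npr npt) (Hcp : Mat npr nct) (Hcc : Mat ncr nct)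
    (Pp Pc : ℝ) (α : ℝ) (Qz : Mat npr ncr) : Set (ℝ × ℝ) :=
  closure (convexHull ℝ
    {R : ℝ × ℝ | 0 ≤ R.1 ∧ 0 ≤ R.2 ∧
      ∃ Qp Qc : Matrix (Fin npt ⊕ Fin nct) (Fin npt ⊕ Fin nct) ℂ,
        Qp.PosSemidef ∧ Qc.PosSemidef ∧ rTr Qp + rTr Qc ≤ Pp + α * Pc ∧
        R.1 ≤ LD (Galpha Hpp Hcp α * Qp * (Galpha Hpp Hcp α)ᴴ
                  + Galpha Hpp Hcp α * Qc * (Galpha Hpp Hcp α)ᴴ)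
              - LD (Galpha Hpp Hcp α * Qc * (Galpha Hpp Hcp α)ᴴ) ∧
        R.2 ≤ Real.log ((Sigmaz Qz + Kbar Hpp Hcp Hcc α * Qc * (Kbar Hpp Hcp Hcc α)ᴴ).det.re)
              - Real.log ((Sigmaz Qz).det.re)})

namespace Matrix

lemma IsHermitian.conjTranspose_toBlocks₁₂ {m n α : Type*} [InvolutiveStar α]
    {S : Matrix (m ⊕ n) (m ⊕ n) α} (hS : S.IsHermitian) : S.toBlocks₁₂ᴴ = S.toBlocks₂₁ := by
  rw [← fromBlocks_toBlocks S] at hS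
  exact (isHermitian_fromBlocks_iff.mp hS).2.1

variable {m n 𝕜 : Type*} [Fintype m] [Fintype n] [DecidableEq m] [DecidableEq n] [RCLike 𝕜]

lemma IsHermitian.det_one_add_eq_prod {A : Matrix n n 𝕜} (hA : A.IsHermitian) :
    (1 + A).det = ∏ i, (1 + hA.eigenvalues i : 𝕜) := by
  set U : Matrix n n 𝕜 := (hA.eigenvectorUnitary : Matrix n n 𝕜)
  have hA' : A = U * diagonal (RCLike.ofReal ∘ hA.eigenvalues) * Uᴴ := hA.spectral_theorem
  have hUU : Uᴴ * U = 1 := Unitary.coe_star_mul_self _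
  conv_lhs => rw [hA', det_one_add_mul_comm, ← Matrix.mul_assoc, hUU, Matrix.one_mul,
    ← diagonal_one, diagonal_add, det_diagonal]
  simp

namespace PosSemidef

lemma one_le_det_one_add {A : Matrix n n 𝕜} (hA : A.PosSemidef) : 1 ≤ (1 + A).det := by
  rw [hA.1.det_one_add_eq_prod]
  exact Finset.one_le_prod fun i _ ↦
    le_add_of_nonneg_right (RCLike.ofReal_nonneg.mpr (hA.eigenvalues_nonneg i))

lemma exists_eq_conjTranspose_mul_self {A : Matrix n n 𝕜} (hA : A.PosSemidef) :
    ∃ B : Matrix n n 𝕜, A = Bᴴ * B := by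
  open scoped MatrixOrder in
  obtain ⟨B, rfl⟩ := CStarAlgebra.nonneg_iff_eq_star_mul_self.mp hA.nonneg
  exact ⟨B, rfl⟩

lemma isUnit_det_one_add {A : Matrix n n 𝕜} (hA : A.PosSemidef) : IsUnit (1 + A).det :=
  isUnit_iff_ne_zero.mpr (zero_lt_one.trans_le hA.one_le_det_one_add).ne'

lemma det_one_add_add_conjTranspose_mul {P : Matrix n n 𝕜} (hP : P.PosSemidef)
    (E : Matrix m n 𝕜) :
    (1 + (P + Eᴴ * E)).det = (1 + P).det * (1 + E * (1 + P)⁻¹ * Eᴴ).det := by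
  have hfactor : 1 + (P + Eᴴ * E) = (1 + P) * (1 + (1 + P)⁻¹ * Eᴴ * E) := by
    rw [Matrix.mul_add, Matrix.mul_one, ← Matrix.mul_assoc, ← Matrix.mul_assoc,
      mul_nonsing_inv _ hP.isUnit_det_one_add, Matrix.one_mul, add_assoc]
  rw [hfactor, det_mul, det_one_add_mul_comm, Matrix.mul_assoc]

lemma det_one_add_le {P Q : Matrix n n 𝕜} (hP : P.PosSemidef) (hPQ : (Q - P).PosSemidef) :
    (1 + P).det ≤ (1 + Q).det := by
  obtain ⟨E, hE⟩ := hPQ.exists_eq_conjTranspose_mul_self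
  rw [← add_sub_cancel P Q, hE, hP.det_one_add_add_conjTranspose_mul]
  have hF : (E * (1 + P)⁻¹ * Eᴴ).PosSemidef :=
    (PosSemidef.one.add hP).inv.mul_mul_conjTranspose_same E
  exact le_mul_of_one_le_right (PosSemidef.one.add hP).det_nonneg hF.one_le_det_one_add

lemma one_sub_inv_one_add {A : Matrix n n 𝕜} (hA : A.PosSemidef) :
    (1 - (1 + A)⁻¹).PosSemidef := by
  set N := 1 + A with hN
  have hunit := hA.isUnit_det_one_add
  have hNinv : N⁻¹.IsHermitian := (PosSemidef.one.add hA).1.inv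
  have h : 1 - N⁻¹ = (N⁻¹)ᴴ * (A + Aᴴ * A) * N⁻¹ :=
    calc 1 - N⁻¹ = N⁻¹ * N - N⁻¹ := by rw [nonsing_inv_mul _ hunit]
      _ = N⁻¹ * A := by rw [hN, Matrix.mul_add, Matrix.mul_one, add_sub_cancel_left]
      _ = N⁻¹ * (A * N) * N⁻¹ := by
          rw [← Matrix.mul_assoc, Matrix.mul_assoc _ N, mul_nonsing_inv _ hunit, Matrix.mul_one]
      _ = (N⁻¹)ᴴ * (A + Aᴴ * A) * N⁻¹ := by
          rw [hNinv.eq, hA.1.eq, Matrix.mul_add, Matrix.mul_one]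
  rw [h]
  exact (hA.add (posSemidef_conjTranspose_mul_self A)).conjTranspose_mul_mul_same _

/-- Writing `X = Bᴴ B`, the factor `det (1 + X)` is traded for `det (1 + B (1 + Y)⁻¹ Bᴴ)`,
which is smaller because `(1 + Y)⁻¹ ≤ 1`. -/
lemma det_one_add_add_le_mul {X Y : Matrix n n 𝕜} (hX : X.PosSemidef) (hY : Y.PosSemidef) :
    (1 + (X + Y)).det ≤ (1 + X).det * (1 + Y).det := by
  obtain ⟨B, rfl⟩ := hX.exists_eq_conjTranspose_mul_self
  have hBN : (B * (1 + Y)⁻¹ * Bᴴ).PosSemidef :=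
    (PosSemidef.one.add hY).inv.mul_mul_conjTranspose_same B
  have hgap : (B * Bᴴ - B * (1 + Y)⁻¹ * Bᴴ).PosSemidef := by
    rw [show B * Bᴴ - B * (1 + Y)⁻¹ * Bᴴ = B * (1 - (1 + Y)⁻¹) * Bᴴ by
      rw [Matrix.mul_sub, Matrix.sub_mul, Matrix.mul_one]]
    exact hY.one_sub_inv_one_add.mul_mul_conjTranspose_same B
  calc (1 + (Bᴴ * B + Y)).det = (1 + Y).det * (1 + B * (1 + Y)⁻¹ * Bᴴ).det := by
        rw [add_comm (Bᴴ * B), hY.det_one_add_add_conjTranspose_mul]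
    _ ≤ (1 + Y).det * (1 + B * Bᴴ).det :=
        mul_le_mul_of_nonneg_left (hBN.det_one_add_le hgap) (PosSemidef.one.add hY).det_nonneg
    _ = (1 + Bᴴ * B).det * (1 + Y).det := by rw [det_one_add_mul_comm, mul_comm]

end PosSemidef

end Matrix

section LogDet

variable {ι : Type*} [Fintype ι]

lemma rTr_nonneg {M : Matrix ι ι ℂ} (hM : M.PosSemidef) : 0 ≤ rTr M := by
  simpa [rTr] using (Complex.le_def.mp hM.trace_nonneg).1

variable [DecidableEq ι]

lemma LD_zero : LD (0 : Matrix ι ι ℂ) = 0 := by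
  simp [LD]

lemma LD_nonneg {M : Matrix ι ι ℂ} (hM : M.PosSemidef) : 0 ≤ LD M :=
  Real.log_nonneg (by simpa using (Complex.le_def.mp hM.one_le_det_one_add).1)

lemma LD_add_sub_le {X Y : Matrix ι ι ℂ} (hX : X.PosSemidef) (hY : Y.PosSemidef) :
    LD (X + Y) - LD Y ≤ LD X := by
  obtain ⟨hXre, hXim⟩ := Complex.le_def.mp hX.one_le_det_one_add
  obtain ⟨hYre, hYim⟩ := Complex.le_def.mp hY.one_le_det_one_add
  have hle := (Complex.le_def.mp (hX.det_one_add_add_le_mul hY)).1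
  rw [Complex.mul_re, ← hXim, ← hYim, Complex.one_im, mul_zero, sub_zero] at hle
  rw [Complex.one_re] at hXre hYre
  have hXYpos := zero_lt_one.trans_le (Complex.le_def.mp (hX.add hY).one_le_det_one_add).1
  rw [sub_le_iff_le_add, LD, LD, LD, ← Real.log_mul (by positivity) (by positivity)]
  exact Real.log_le_log (by simpa using hXYpos) hle

end LogDet

lemma ContinuousLinearMap.biSup_closure_convexHull {E : Type*} [AddCommGroup E] [Module ℝ E]
    [TopologicalSpace E] (φ : E →L[ℝ] ℝ) (s : Set E) :
    ⨆ x ∈ closure (convexHull ℝ s), (φ x : EReal) = ⨆ x ∈ s, (φ x : EReal) := by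
  refine le_antisymm (iSup₂_le fun x hx ↦ ?_)
    (biSup_mono fun x hx ↦ subset_closure (subset_convexHull ℝ s hx))
  set c := ⨆ x ∈ s, (φ x : EReal)
  have hclosed : IsClosed {x | (φ x : EReal) ≤ c} :=
    isClosed_le (continuous_coe_real_ereal.comp φ.continuous) continuous_const
  have hconvex : Convex ℝ {x | (φ x : EReal) ≤ c} :=
    (IsLowerSet.ordConnected fun _ _ hab hb ↦ (EReal.coe_le_coe_iff.mpr hab).trans hb).convex
      |>.linear_preimage (φ : E →ₗ[ℝ] ℝ)
  exact closure_minimal (convexHull_min (fun x hx ↦ le_iSup₂ (f := fun x _ ↦ (φ x : EReal)) x hx)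
    hconvex) hclosed hx

/-- The set whose closed convex hull is `R_in`. -/
def achievablePoints {npt nct npr ncr : ℕ} (Hpp : Mat npr npt) (Hcp : Mat npr nct)
    (Hcc : Mat ncr nct) (Pp Pc : ℝ) : Set (ℝ × ℝ) :=
  {R : ℝ × ℝ | 0 ≤ R.1 ∧ 0 ≤ R.2 ∧
    ∃ (Sp : Mat npt npt) (Scp Scc : Mat nct nct) (Q : Mat npt nct),
      Sp.PosSemidef ∧ Scp.PosSemidef ∧ Scc.PosSemidef ∧
      (fromBlocks Sp Q Qᴴ Scp).PosSemidef ∧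
      rTr Sp ≤ Pp ∧ rTr Scp + rTr Scc ≤ Pc ∧
      R.1 ≤ LD (Gmat Hpp Hcp * fromBlocks Sp Q Qᴴ Scp * (Gmat Hpp Hcp)ᴴ
                + Hcp * Scc * Hcpᴴ)
            - LD (Hcp * Scc * Hcpᴴ) ∧
      R.2 ≤ LD (Hcc * Scc * Hccᴴ)}

def licensedCovariances (npt nct : ℕ) (Pp Pc : ℝ) :
    Set (Matrix (Fin npt ⊕ Fin nct) (Fin npt ⊕ Fin nct) ℂ) :=
  {S | S.PosSemidef ∧ rTr S.toBlocks₁₁ ≤ Pp ∧ rTr S.toBlocks₂₂ ≤ Pc}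

section Achievable

variable {npt nct npr ncr : ℕ} {Hpp : Mat npr npt} {Hcp : Mat npr nct} {Hcc : Mat ncr nct}
  {Pp Pc : ℝ}

lemma exists_licensedCovariances_of_mem_achievablePoints {R : ℝ × ℝ}
    (hR : R ∈ achievablePoints Hpp Hcp Hcc Pp Pc) :
    ∃ S ∈ licensedCovariances npt nct Pp Pc, R.1 ≤ LD (Gmat Hpp Hcp * S * (Gmat Hpp Hcp)ᴴ) := by
  obtain ⟨-, -, Sp, Scp, Scc, Q, -, -, hScc, hS, hPp, hPc, hRp, -⟩ := hR
  refine ⟨fromBlocks Sp Q Qᴴ Scp, ⟨hS, ?_, ?_⟩, ?_⟩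
  · rwa [toBlocks_fromBlocks₁₁]
  · rw [toBlocks_fromBlocks₂₂]
    linarith [rTr_nonneg hScc]
  · exact hRp.trans (LD_add_sub_le (hS.mul_mul_conjTranspose_same _)
      (hScc.mul_mul_conjTranspose_same _))

lemma mk_LD_zero_mem_achievablePoints {S : Matrix (Fin npt ⊕ Fin nct) (Fin npt ⊕ Fin nct) ℂ}
    (hS : S ∈ licensedCovariances npt nct Pp Pc) :
    (LD (Gmat Hpp Hcp * S * (Gmat Hpp Hcp)ᴴ), 0) ∈ achievablePoints Hpp Hcp Hcc Pp Pc := by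
  obtain ⟨hS, hPp, hPc⟩ := hS
  have hblocks : fromBlocks S.toBlocks₁₁ S.toBlocks₁₂ S.toBlocks₁₂ᴴ S.toBlocks₂₂ = S := by
    rw [hS.1.conjTranspose_toBlocks₁₂, fromBlocks_toBlocks]
  refine ⟨LD_nonneg (hS.mul_mul_conjTranspose_same _), le_rfl, S.toBlocks₁₁, S.toBlocks₂₂, 0,
    S.toBlocks₁₂, hS.submatrix Sum.inl, hS.submatrix Sum.inr, .zero, hblocks ▸ hS, hPp, ?_, ?_, ?_⟩
  · simpa [rTr] using hPc
  · simp [hblocks, LD_zero]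
  · simp [LD_zero]

end Achievable

theorem statement15_general {npt nct npr ncr : ℕ}
    (Hpp : Mat npr npt) (Hcp : Mat npr nct) (Hcc : Mat ncr nct)
    (Pp Pc : ℝ) :
    (⨆ R ∈ Rin Hpp Hcp Hcc Pp Pc, ((R.1 : ℝ) : EReal)) =
      ⨆ S ∈ {S : Matrix (Fin npt ⊕ Fin nct) (Fin npt ⊕ Fin nct) ℂ |
          S.PosSemidef ∧ rTr S.toBlocks₁₁ ≤ Pp ∧ rTr S.toBlocks₂₂ ≤ Pc},
        ((LD (Gmat Hpp Hcp * S * (Gmat Hpp Hcp)ᴴ) : ℝ) : EReal) := by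
  calc (⨆ R ∈ Rin Hpp Hcp Hcc Pp Pc, ((R.1 : ℝ) : EReal))
      = ⨆ R ∈ achievablePoints Hpp Hcp Hcc Pp Pc, ((R.1 : ℝ) : EReal) :=
        (ContinuousLinearMap.fst ℝ ℝ ℝ).biSup_closure_convexHull _
    _ = ⨆ S ∈ licensedCovariances npt nct Pp Pc,
          ((LD (Gmat Hpp Hcp * S * (Gmat Hpp Hcp)ᴴ) : ℝ) : EReal) := by
        refine le_antisymm (iSup₂_le fun R hR ↦ ?_) (iSup₂_le fun S hS ↦ ?_)
        · obtain ⟨S, hS, hRS⟩ := exists_licensedCovariances_of_mem_achievablePoints hR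
          exact le_iSup₂_of_le S hS (EReal.coe_le_coe_iff.mpr hRS)
        · exact le_iSup₂_of_le (_, 0) (mk_LD_zero_mem_achievablePoints hS) le_rfl

theorem statement15 {npt nct npr ncr : ℕ}
    (hnpt : 0 < npt) (hnct : 0 < nct) (hnpr : 0 < npr) (hncr : 0 < ncr)
    (Hpp : Mat npr npt) (Hcp : Mat npr nct) (Hcc : Mat ncr nct)
    (Pp Pc : ℝ) (hPp : 0 < Pp) (hPc : 0 < Pc) :
    (⨆ R ∈ Rin Hpp Hcp Hcc Pp Pc, ((R.1 : ℝ) : EReal)) =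
      ⨆ S ∈ {S : Matrix (Fin npt ⊕ Fin nct) (Fin npt ⊕ Fin nct) ℂ |
          S.PosSemidef ∧ rTr S.toBlocks₁₁ ≤ Pp ∧ rTr S.toBlocks₂₂ ≤ Pc},
        ((LD (Gmat Hpp Hcp * S * (Gmat Hpp Hcp)ᴴ) : ℝ) : EReal) :=
  statement15_general Hpp Hcp Hcc Pp Pc
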